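/- Let γ > 1, let N ≥ 2 and M ≥ 2 be integers, and let h̄ < h ≤ 0 be integers. There is a constant C (depending only on γ, N, M) such that for all real x ≥ 0, ∫_0^∞ (1/(1 + (γ^h y)^N)) · (γ^{h̄}/(1 + (γ^{h̄}|x − y|)^M)) dy ≤ C · γ^{h̄ − h} · 1/(1 + (γ^{h̄} x)^{min(N,M)−1}). -/
import Mathlib

open MeasureTheory Set Real

private lemma wid_pow_inv_le (t : ℝ) (ht : 0 ≤ t) {n : ℕ} (hn : 2 ≤ n) :
    (1 + t ^ n)⁻¹ ≤ 2 * (1 + t ^ 2)⁻¹ := by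
  have h2 : (0:ℝ) < 1 + t ^ 2 := by positivity
  have hn0 : (0:ℝ) < 1 + t ^ n := by positivity
  rcases le_total t 1 with h1 | h1
  · have hA : (1 + t ^ n)⁻¹ ≤ 1 := by
      rw [inv_le_one_iff₀]; right; nlinarith [pow_nonneg ht n]
    have hB : (1:ℝ) ≤ 2 * (1 + t ^ 2)⁻¹ := by
      have ht2 : 1 + t ^ 2 ≤ 2 := by nlinarith
      have := (inv_le_inv₀ (by norm_num : (0:ℝ) < 2) h2).mpr ht2
      linarith
    linarith
  · have hpow : t ^ 2 ≤ t ^ n := pow_le_pow_right₀ h1 hn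
    have := (inv_le_inv₀ hn0 h2).mpr (by linarith)
    have h2inv : (0:ℝ) ≤ (1 + t ^ 2)⁻¹ := by positivity
    linarith

private lemma wid_integrable_scale {c : ℝ} (hc : 0 < c) :
    Integrable (fun y : ℝ => (1 + (c * y) ^ 2)⁻¹) :=
  integrable_inv_one_add_sq.comp_mul_left' hc.ne'

private lemma wid_integral_scale {c : ℝ} (hc : 0 < c) :
    (∫ y : ℝ, (1 + (c * y) ^ 2)⁻¹) = π / c := by
  have := MeasureTheory.Measure.integral_comp_mul_left
    (fun u : ℝ => (1 + u ^ 2)⁻¹) c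
  rw [this, integral_univ_inv_one_add_sq, abs_of_pos (inv_pos.mpr hc), smul_eq_mul,
    inv_mul_eq_div]

private lemma wid_integrable_shift {c : ℝ} (hc : 0 < c) (x : ℝ) :
    Integrable (fun y : ℝ => (1 + (c * (y - x)) ^ 2)⁻¹) :=
  (wid_integrable_scale hc).comp_sub_right x

private lemma wid_integral_shift {c : ℝ} (hc : 0 < c) (x : ℝ) :
    (∫ y : ℝ, (1 + (c * (y - x)) ^ 2)⁻¹) = π / c := by
  rw [integral_sub_right_eq_self (fun y : ℝ => (1 + (c * y) ^ 2)⁻¹) x]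
  exact wid_integral_scale hc

set_option maxHeartbeats 2000000 in
theorem weighted_integration_dimensional_gain
    (γ : ℝ) (hγ : 1 < γ) (N M : ℕ) (hN : 2 ≤ N) (hM : 2 ≤ M) :
    ∃ C : ℝ, 0 < C ∧ ∀ hbar h : ℤ, hbar < h → h ≤ 0 → ∀ x : ℝ, 0 ≤ x →
      (∫ y in Set.Ioi (0:ℝ),
          (1 / (1 + (γ ^ h * y) ^ N)) * (γ ^ hbar / (1 + (γ ^ hbar * |x - y|) ^ M)))
        ≤ C * γ ^ (hbar - h) * (1 / (1 + (γ ^ hbar * x) ^ (min N M - 1))) := by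
  have hγ0 : (0:ℝ) < γ := lt_trans zero_lt_one hγ
  have hπ : (0:ℝ) < π := Real.pi_pos
  refine ⟨π * (2 ^ (M + 3) + 2 ^ (N + 3) + 4), by positivity, ?_⟩
  intro hbar h hlt hh0 x hx
  set C : ℝ := π * (2 ^ (M + 3) + 2 ^ (N + 3) + 4) with hC
  set a : ℝ := γ ^ h with ha_def
  set b : ℝ := γ ^ hbar with hb_def
  have ha : 0 < a := zpow_pos hγ0 _
  have hb : 0 < b := zpow_pos hγ0 _
  have hba : b ≤ a := zpow_le_zpow_right₀ hγ.le hlt.le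
  have hgain : γ ^ (hbar - h) = b / a := by
    rw [zpow_sub₀ (ne_of_gt hγ0)]
  set k : ℕ := min N M - 1 with hk
  have hkN : k ≤ N := le_trans (Nat.sub_le _ _) (min_le_left _ _)
  have hkM : k ≤ M := le_trans (Nat.sub_le _ _) (min_le_right _ _)
  clear_value C a b k
  set F : ℝ → ℝ := fun y =>
    1 / (1 + (a * y) ^ N) * (b / (1 + (b * |x - y|) ^ M)) with hF_def
  set G : ℝ → ℝ := fun y => 2 * b * (1 + (b * (y - x)) ^ 2)⁻¹ with hG_def
  -- basic positivity of denominators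
  have hden2 : ∀ y : ℝ, (0:ℝ) < 1 + (b * |x - y|) ^ M := by
    intro y
    have : (0:ℝ) ≤ (b * |x - y|) ^ M := pow_nonneg (by positivity) _
    linarith
  have hden1 : ∀ y : ℝ, 0 ≤ y → (0:ℝ) < 1 + (a * y) ^ N := by
    intro y hy
    have : (0:ℝ) ≤ (a * y) ^ N := pow_nonneg (by positivity) _
    linarith
  have hF_nonneg : ∀ y : ℝ, 0 ≤ y → 0 ≤ F y := by
    intro y hy
    have h1 := hden1 y hy
    have h2 := hden2 y
    rw [hF_def]
    positivity
  -- the second factor is bounded by G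
  have hg_le_G : ∀ y : ℝ, b / (1 + (b * |x - y|) ^ M) ≤ G y := by
    intro y
    have ht : (0:ℝ) ≤ b * |x - y| := by positivity
    have h1 := wid_pow_inv_le (b * |x - y|) ht hM
    have hsq : (b * |x - y|) ^ 2 = (b * (y - x)) ^ 2 := by
      rw [mul_pow, mul_pow, sq_abs]; ring
    rw [hsq] at h1
    have h2 := mul_le_mul_of_nonneg_left h1 hb.le
    calc b / (1 + (b * |x - y|) ^ M) = b * (1 + (b * |x - y|) ^ M)⁻¹ := by
          rw [div_eq_mul_inv]
      _ ≤ b * (2 * (1 + (b * (y - x)) ^ 2)⁻¹) := h2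
      _ = G y := by rw [hG_def]; ring
  have hg_nonneg : ∀ y : ℝ, 0 ≤ b / (1 + (b * |x - y|) ^ M) := by
    intro y; have := hden2 y; positivity
  have hG_int : Integrable G := (wid_integrable_shift hb x).const_mul (2 * b)
  have hG_integral : (∫ y : ℝ, G y) = 2 * π := by
    rw [hG_def]
    rw [MeasureTheory.integral_const_mul, wid_integral_shift hb x]
    field_simp
  have hG_nonneg : ∀ y : ℝ, 0 ≤ G y := by
    intro y
    have : (0:ℝ) < 1 + (b * (y - x)) ^ 2 := by positivity
    rw [hG_def]
    positivity
  have hF_meas : Measurable F := by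
    rw [hF_def]; fun_prop
  have hF_le_G : ∀ y : ℝ, 0 ≤ y → F y ≤ G y := by
    intro y hy
    have h1 : 1 / (1 + (a * y) ^ N) ≤ 1 := by
      rw [div_le_one (hden1 y hy)]
      have : (0:ℝ) ≤ (a * y) ^ N := pow_nonneg (by positivity) _
      linarith
    calc F y = 1 / (1 + (a * y) ^ N) * (b / (1 + (b * |x - y|) ^ M)) := rfl
      _ ≤ 1 * (b / (1 + (b * |x - y|) ^ M)) :=
          mul_le_mul_of_nonneg_right h1 (hg_nonneg y)
      _ = b / (1 + (b * |x - y|) ^ M) := one_mul _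
      _ ≤ G y := hg_le_G y
  have hF_int : IntegrableOn F (Ioi (0:ℝ)) := by
    apply Integrable.mono' hG_int.integrableOn hF_meas.aestronglyMeasurable.restrict
    filter_upwards [ae_restrict_mem measurableSet_Ioi] with y hy
    rw [Real.norm_of_nonneg (hF_nonneg y (le_of_lt hy))]
    exact hF_le_G y (le_of_lt hy)
  -- integrability of the second factor
  have hg_meas : Measurable fun y : ℝ => b / (1 + (b * |x - y|) ^ M) := by fun_prop
  have hg_int : Integrable (fun y : ℝ => b / (1 + (b * |x - y|) ^ M)) := by
    apply Integrable.mono' hG_int hg_meas.aestronglyMeasurable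
    filter_upwards with y
    rw [Real.norm_of_nonneg (hg_nonneg y)]
    exact hg_le_G y
  -- the integral of the second factor over any set is at most 2π
  have hg_setint : ∀ s : Set ℝ, MeasurableSet s →
      (∫ y in s, b / (1 + (b * |x - y|) ^ M)) ≤ 2 * π := by
    intro s hs
    calc (∫ y in s, b / (1 + (b * |x - y|) ^ M))
        ≤ ∫ y in s, G y := setIntegral_mono_on hg_int.integrableOn hG_int.integrableOn hs
          (fun y _ => hg_le_G y)
      _ ≤ ∫ y : ℝ, G y := setIntegral_le_integral hG_int
          (Filter.Eventually.of_forall hG_nonneg)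
      _ = 2 * π := hG_integral
  -- the integral of the first factor over subsets of Ioi 0 is at most 2π/a
  have hf1_meas : Measurable fun y : ℝ => 1 / (1 + (a * y) ^ N) := by fun_prop
  have hG1_int : Integrable (fun y : ℝ => 2 * (1 + (a * y) ^ 2)⁻¹) :=
    (wid_integrable_scale ha).const_mul 2
  have hf1_le : ∀ y : ℝ, 0 ≤ y → 1 / (1 + (a * y) ^ N) ≤ 2 * (1 + (a * y) ^ 2)⁻¹ := by
    intro y hy
    rw [one_div]
    exact wid_pow_inv_le (a * y) (by positivity) hN
  have hf1_nonneg : ∀ y : ℝ, 0 ≤ y → 0 ≤ 1 / (1 + (a * y) ^ N) := by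
    intro y hy; have := hden1 y hy; positivity
  have hf1_int : IntegrableOn (fun y : ℝ => 1 / (1 + (a * y) ^ N)) (Ioi (0:ℝ)) := by
    apply Integrable.mono' hG1_int.integrableOn hf1_meas.aestronglyMeasurable.restrict
    filter_upwards [ae_restrict_mem measurableSet_Ioi] with y hy
    rw [Real.norm_of_nonneg (hf1_nonneg y hy.le)]
    exact hf1_le y hy.le
  have hf1_setint : ∀ s : Set ℝ, MeasurableSet s → s ⊆ Ioi (0:ℝ) →
      (∫ y in s, 1 / (1 + (a * y) ^ N)) ≤ 2 * π / a := by
    intro s hs hss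
    have hG1_nonneg : ∀ y : ℝ, 0 ≤ 2 * (1 + (a * y) ^ 2)⁻¹ := by
      intro y
      have : (0:ℝ) < 1 + (a * y) ^ 2 := by positivity
      positivity
    calc (∫ y in s, 1 / (1 + (a * y) ^ N))
        ≤ ∫ y in s, 2 * (1 + (a * y) ^ 2)⁻¹ :=
          setIntegral_mono_on (hf1_int.mono_set hss) hG1_int.integrableOn hs
            (fun y hy => hf1_le y (le_of_lt (hss hy)))
      _ ≤ ∫ y : ℝ, 2 * (1 + (a * y) ^ 2)⁻¹ := setIntegral_le_integral hG1_int
          (Filter.Eventually.of_forall hG1_nonneg)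
      _ = 2 * (π / a) := by rw [MeasureTheory.integral_const_mul, wid_integral_scale ha]
      _ = 2 * π / a := by ring
  have hD : (0:ℝ) < 1 + (b * x) ^ k := by
    have : (0:ℝ) ≤ (b * x) ^ k := pow_nonneg (by positivity) _
    linarith
  rw [hgain]
  rcases le_total (b * x) 1 with hbx | hbx
  · -- small x : b * x ≤ 1
    have hD2 : 1 + (b * x) ^ k ≤ 2 := by
      have : (b * x) ^ k ≤ 1 := pow_le_one₀ (by positivity) hbx
      linarith
    have hbound : (∫ y in Ioi (0:ℝ), F y) ≤ b * (2 * π / a) := by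
      have step : (∫ y in Ioi (0:ℝ), F y)
          ≤ ∫ y in Ioi (0:ℝ), b * (1 / (1 + (a * y) ^ N)) := by
        apply setIntegral_mono_on hF_int (hf1_int.const_mul b) measurableSet_Ioi
        intro y hy
        have h2 : b / (1 + (b * |x - y|) ^ M) ≤ b := by
          rw [div_le_iff₀ (hden2 y)]
          have : (0:ℝ) ≤ (b * |x - y|) ^ M := pow_nonneg (by positivity) _
          nlinarith
        calc F y = 1 / (1 + (a * y) ^ N) * (b / (1 + (b * |x - y|) ^ M)) := rfl
          _ ≤ 1 / (1 + (a * y) ^ N) * b :=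
              mul_le_mul_of_nonneg_left h2 (hf1_nonneg y (le_of_lt hy))
          _ = b * (1 / (1 + (a * y) ^ N)) := by ring
      calc (∫ y in Ioi (0:ℝ), F y)
          ≤ ∫ y in Ioi (0:ℝ), b * (1 / (1 + (a * y) ^ N)) := step
        _ = b * ∫ y in Ioi (0:ℝ), 1 / (1 + (a * y) ^ N) := by
            rw [MeasureTheory.integral_const_mul]
        _ ≤ b * (2 * π / a) := by
            exact mul_le_mul_of_nonneg_left
              (hf1_setint _ measurableSet_Ioi (subset_refl _)) hb.le
    refine le_trans hbound ?_
    -- b * (2π/a) ≤ C * (b/a) * (1/(1+(bx)^k))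
    have hhalf : (1:ℝ) / 2 ≤ 1 / (1 + (b * x) ^ k) :=
      one_div_le_one_div_of_le hD hD2
    have hC4 : 4 * π ≤ C := by
      rw [hC]
      nlinarith [pow_pos (show (0:ℝ) < 2 by norm_num) (M + 3),
        pow_pos (show (0:ℝ) < 2 by norm_num) (N + 3)]
    have hCpos : (0:ℝ) < C := by
      rw [hC]; positivity
    calc b * (2 * π / a) = 2 * π * (b / a) := by ring
      _ ≤ C / 2 * (b / a) := by
          apply mul_le_mul_of_nonneg_right (by linarith) (by positivity)
      _ = C * (b / a) * (1 / 2) := by ring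
      _ ≤ C * (b / a) * (1 / (1 + (b * x) ^ k)) := by
          apply mul_le_mul_of_nonneg_left hhalf (by positivity)
  · -- large x : 1 ≤ b * x
    have hx0 : 0 < x := by nlinarith
    set u : ℝ := b * x with hu_def
    have hu1 : (1:ℝ) ≤ u := hbx
    clear_value u
    have hu0 : (0:ℝ) < u := lt_of_lt_of_le one_pos hu1
    have huk : (1:ℝ) ≤ u ^ k := one_le_pow₀ hu1
    have hukM : u ^ k ≤ u ^ M := pow_le_pow_right₀ hu1 hkM
    have hukN : u ^ k ≤ u ^ N := pow_le_pow_right₀ hu1 hkN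
    have hD4M : 1 + u ^ k ≤ 4 * u ^ M := by linarith
    have hD4N : 1 + u ^ k ≤ 4 * u ^ N := by linarith
    have hsplit : Ioi (0:ℝ) = Ioc 0 (x / 2) ∪ Ioi (x / 2) :=
      (Ioc_union_Ioi_eq_Ioi (by positivity)).symm
    have hsub1 : Ioc (0:ℝ) (x / 2) ⊆ Ioi 0 := Ioc_subset_Ioi_self
    have hsub2 : Ioi (x / 2) ⊆ Ioi (0:ℝ) := Ioi_subset_Ioi (by positivity)
    have hint1 : IntegrableOn F (Ioc 0 (x / 2)) := hF_int.mono_set hsub1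
    have hint2 : IntegrableOn F (Ioi (x / 2)) := hF_int.mono_set hsub2
    have hIsplit : (∫ y in Ioi (0:ℝ), F y)
        = (∫ y in Ioc 0 (x / 2), F y) + ∫ y in Ioi (x / 2), F y := by
      rw [hsplit]
      exact setIntegral_union (Ioc_disjoint_Ioi le_rfl) measurableSet_Ioi hint1 hint2
    -- bound on I₁
    have hc1den : (0:ℝ) < (b * (x / 2)) ^ M := pow_pos (by positivity) _
    have hI1 : (∫ y in Ioc 0 (x / 2), F y)
        ≤ b / (b * (x / 2)) ^ M * (2 * π / a) := by
      have hptwise : ∀ y ∈ Ioc (0:ℝ) (x / 2),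
          F y ≤ b / (b * (x / 2)) ^ M * (1 / (1 + (a * y) ^ N)) := by
        intro y hy
        obtain ⟨hy0, hy2⟩ := hy
        have habs : x / 2 ≤ |x - y| := by
          rw [abs_of_nonneg (by linarith)]
          linarith
        have hpow : (b * (x / 2)) ^ M ≤ (b * |x - y|) ^ M := by
          apply pow_le_pow_left₀ (by positivity)
          exact mul_le_mul_of_nonneg_left habs hb.le
        have h2 : b / (1 + (b * |x - y|) ^ M) ≤ b / (b * (x / 2)) ^ M := by
          apply div_le_div_of_nonneg_left hb.le hc1den
          linarith
        calc F y = 1 / (1 + (a * y) ^ N) * (b / (1 + (b * |x - y|) ^ M)) := rfl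
          _ ≤ 1 / (1 + (a * y) ^ N) * (b / (b * (x / 2)) ^ M) :=
              mul_le_mul_of_nonneg_left h2 (hf1_nonneg y hy0.le)
          _ = b / (b * (x / 2)) ^ M * (1 / (1 + (a * y) ^ N)) := by ring
      calc (∫ y in Ioc 0 (x / 2), F y)
          ≤ ∫ y in Ioc 0 (x / 2), b / (b * (x / 2)) ^ M * (1 / (1 + (a * y) ^ N)) :=
            setIntegral_mono_on hint1
              ((hf1_int.mono_set hsub1).const_mul _) measurableSet_Ioc hptwise
        _ = b / (b * (x / 2)) ^ M * ∫ y in Ioc 0 (x / 2), 1 / (1 + (a * y) ^ N) := by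
            rw [MeasureTheory.integral_const_mul]
        _ ≤ b / (b * (x / 2)) ^ M * (2 * π / a) := by
            apply mul_le_mul_of_nonneg_left
              (hf1_setint _ measurableSet_Ioc hsub1) (by positivity)
    -- bound on I₂
    have hc2den : (0:ℝ) < (a * (x / 2)) ^ N := pow_pos (by positivity) _
    have hI2 : (∫ y in Ioi (x / 2), F y)
        ≤ 1 / (a * (x / 2)) ^ N * (2 * π) := by
      have hptwise : ∀ y ∈ Ioi (x / 2),
          F y ≤ 1 / (a * (x / 2)) ^ N * (b / (1 + (b * |x - y|) ^ M)) := by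
        intro y hy
        have hy2 : x / 2 < y := hy
        have hy0 : 0 ≤ y := by linarith
        have hpow : (a * (x / 2)) ^ N ≤ (a * y) ^ N := by
          apply pow_le_pow_left₀ (by positivity)
          exact mul_le_mul_of_nonneg_left hy2.le ha.le
        have h1 : 1 / (1 + (a * y) ^ N) ≤ 1 / (a * (x / 2)) ^ N := by
          apply div_le_div_of_nonneg_left one_pos.le hc2den
          linarith
        exact mul_le_mul_of_nonneg_right h1 (hg_nonneg y)
      calc (∫ y in Ioi (x / 2), F y)
          ≤ ∫ y in Ioi (x / 2), 1 / (a * (x / 2)) ^ N * (b / (1 + (b * |x - y|) ^ M)) := by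
            exact setIntegral_mono_on hint2 (hg_int.integrableOn.const_mul _)
              measurableSet_Ioi hptwise
        _ = 1 / (a * (x / 2)) ^ N * ∫ y in Ioi (x / 2), b / (1 + (b * |x - y|) ^ M) := by
            rw [MeasureTheory.integral_const_mul]
        _ ≤ 1 / (a * (x / 2)) ^ N * (2 * π) := by
            apply mul_le_mul_of_nonneg_left
              (hg_setint _ measurableSet_Ioi) (by positivity)
    -- arithmetic for I₁
    have hA : b / (b * (x / 2)) ^ M * (2 * π / a)
        ≤ π * 2 ^ (M + 3) * (b / a) * (1 / (1 + u ^ k)) := by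
      have he1 : b * (x / 2) = u / 2 := by rw [hu_def]; ring
      have he2 : (u / 2) ^ M = u ^ M / 2 ^ M := div_pow u 2 M
      have huM : (0:ℝ) < u ^ M := pow_pos hu0 _
      rw [he1, he2]
      have hLHS : b / (u ^ M / 2 ^ M) * (2 * π / a)
          = 2 ^ (M + 1) * π * b / (a * u ^ M) := by
        field_simp
        ring
      have hRHS : π * 2 ^ (M + 3) * (b / a) * (1 / (1 + u ^ k))
          = π * 2 ^ (M + 3) * b / (a * (1 + u ^ k)) := by
        field_simp
      rw [hLHS, hRHS]
      rw [div_le_div_iff₀ (by positivity) (by positivity)]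
      have key := mul_le_mul_of_nonneg_left hD4M
        (show (0:ℝ) ≤ 2 ^ (M + 1) * π * b * a by positivity)
      have h23 : (2:ℝ) ^ (M + 3) = 2 ^ (M + 1) * 4 := by
        rw [pow_succ, pow_succ]; ring
      rw [h23]
      nlinarith [key]
    -- arithmetic for I₂
    have hB : 1 / (a * (x / 2)) ^ N * (2 * π)
        ≤ π * 2 ^ (N + 3) * (b / a) * (1 / (1 + u ^ k)) := by
      have hab1 : (1:ℝ) ≤ a / b := (one_le_div hb).mpr hba
      have he1 : a * (x / 2) = a / b * (u / 2) := by
        rw [hu_def]; field_simp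
      have hge : a / b * (u / 2) ^ N ≤ (a * (x / 2)) ^ N := by
        rw [he1, mul_pow]
        apply mul_le_mul_of_nonneg_right (le_self_pow₀ hab1 (by omega))
          (by positivity)
      have h1 : 1 / (a * (x / 2)) ^ N ≤ 1 / (a / b * (u / 2) ^ N) := by
        apply div_le_div_of_nonneg_left one_pos.le _ hge
        positivity
      have he2 : 1 / (a / b * (u / 2) ^ N) * (2 * π)
          = 2 ^ (N + 1) * π * b / (a * u ^ N) := by
        rw [div_pow]
        field_simp
        ring
      have hRHS : π * 2 ^ (N + 3) * (b / a) * (1 / (1 + u ^ k))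
          = π * 2 ^ (N + 3) * b / (a * (1 + u ^ k)) := by
        field_simp
      calc 1 / (a * (x / 2)) ^ N * (2 * π)
          ≤ 1 / (a / b * (u / 2) ^ N) * (2 * π) :=
            mul_le_mul_of_nonneg_right h1 (by positivity)
        _ = 2 ^ (N + 1) * π * b / (a * u ^ N) := he2
        _ ≤ π * 2 ^ (N + 3) * b / (a * (1 + u ^ k)) := by
            rw [div_le_div_iff₀ (by positivity) (by positivity)]
            have key := mul_le_mul_of_nonneg_left hD4N
              (show (0:ℝ) ≤ 2 ^ (N + 1) * π * b * a by positivity)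
            have h23 : (2:ℝ) ^ (N + 3) = 2 ^ (N + 1) * 4 := by
              rw [pow_succ, pow_succ]; ring
            rw [h23]
            nlinarith [key]
        _ = π * 2 ^ (N + 3) * (b / a) * (1 / (1 + u ^ k)) := hRHS.symm
    calc (∫ y in Ioi (0:ℝ), F y)
        = (∫ y in Ioc 0 (x / 2), F y) + ∫ y in Ioi (x / 2), F y := hIsplit
      _ ≤ π * 2 ^ (M + 3) * (b / a) * (1 / (1 + u ^ k))
          + π * 2 ^ (N + 3) * (b / a) * (1 / (1 + u ^ k)) :=
          add_le_add (le_trans hI1 hA) (le_trans hI2 hB)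
      _ ≤ C * (b / a) * (1 / (1 + u ^ k)) := by
          have hfac : (0:ℝ) ≤ b / a * (1 / (1 + u ^ k)) := by positivity
          rw [hC]
          nlinarith [hfac, hπ]
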